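/- Let (X,d) be a metric space, let (x_n)_{n≥1} and (y_n)_{n≥1} be sequences in X both converging to a point x* ∈ X. Then there exist sequences (a_n) and (b_n) of positive real numbers converging to 0 such that d(x_n, x*) ≤ a_n and d(y_n, x*) ≤ b_n for all n, and a_n / b_n → 0 as n → ∞. (That is, (x_n) converges faster than (y_n) to x* in the sense of Berinde's Definition 2.7.) -/

import Mathlib

open Filter Topology

/-
Proof idea: it suffices to dominate `d(x n, x*)` and `d(y n, x*)` by positive null sequences
`a` and `c`, and then to slow `c` down to `b = max (√a) c`: since `b ≥ √a`, we get `a / b ≤ √a → 0`.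
-/

lemma exists_pos_ge_tendsto_zero {u : ℕ → ℝ} (hu : Tendsto u atTop (𝓝 0)) :
    ∃ a : ℕ → ℝ, (∀ n, 0 < a n) ∧ (∀ n, u n ≤ a n) ∧ Tendsto a atTop (𝓝 0) := by
  refine ⟨fun n => |u n| + (1 / 2 : ℝ) ^ n, fun n => by positivity,
    fun n => (le_abs_self _).trans (le_add_of_nonneg_right (by positivity)), ?_⟩
  have hpow : Tendsto (fun n : ℕ => (1 / 2 : ℝ) ^ n) atTop (𝓝 0) :=
    tendsto_pow_atTop_nhds_zero_of_lt_one (by norm_num) (by norm_num)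
  simpa using hu.abs.add hpow

lemma div_le_sqrt_of_sqrt_le {a b : ℝ} (ha : 0 ≤ a) (hb : √a ≤ b) : a / b ≤ √a := by
  rcases ha.eq_or_lt with rfl | ha
  · simp
  calc a / b ≤ a / √a := div_le_div_of_nonneg_left ha.le (Real.sqrt_pos.mpr ha) hb
    _ = √a := Real.div_sqrt

lemma tendsto_div_zero_of_sqrt_le {a b : ℕ → ℝ} (ha : ∀ n, 0 ≤ a n) (hb : ∀ n, √(a n) ≤ b n)
    (ha0 : Tendsto a atTop (𝓝 0)) : Tendsto (fun n => a n / b n) atTop (𝓝 0) := by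
  have hsqrt : Tendsto (fun n => √(a n)) atTop (𝓝 0) := by
    simpa using ha0.sqrt
  exact squeeze_zero (fun n => div_nonneg (ha n) ((Real.sqrt_nonneg _).trans (hb n)))
    (fun n => div_le_sqrt_of_sqrt_le (ha n) (hb n)) hsqrt

lemma exists_pos_ge_tendsto_zero_with_div_tendsto_zero {u v : ℕ → ℝ}
    (hu : Tendsto u atTop (𝓝 0)) (hv : Tendsto v atTop (𝓝 0)) :
    ∃ a b : ℕ → ℝ, (∀ n, 0 < a n) ∧ (∀ n, 0 < b n) ∧
      Tendsto a atTop (𝓝 0) ∧ Tendsto b atTop (𝓝 0) ∧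
      (∀ n, u n ≤ a n) ∧ (∀ n, v n ≤ b n) ∧
      Tendsto (fun n => a n / b n) atTop (𝓝 0) := by
  obtain ⟨a, ha_pos, hua, ha0⟩ := exists_pos_ge_tendsto_zero hu
  obtain ⟨c, hc_pos, hvc, hc0⟩ := exists_pos_ge_tendsto_zero hv
  have hb0 : Tendsto (fun n => max √(a n) (c n)) atTop (𝓝 0) := by
    simpa using ha0.sqrt.max hc0
  exact ⟨a, fun n => max √(a n) (c n), ha_pos,
    fun n => (hc_pos n).trans_le (le_max_right _ _), ha0, hb0, hua,
    fun n => (hvc n).trans (le_max_right _ _),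
    tendsto_div_zero_of_sqrt_le (fun n => (ha_pos n).le) (fun n => le_max_left _ _) ha0⟩

/-- Berinde's Definition 2.7 (metric space version): any sequence `(x n)` converges
"faster" than any sequence `(y n)` to their common limit `x*`. -/
theorem berinde_faster {X : Type*} [MetricSpace X] (x y : ℕ → X) (xstar : X)
    (hx : Tendsto x atTop (𝓝 xstar)) (hy : Tendsto y atTop (𝓝 xstar)) :
    ∃ a b : ℕ → ℝ, (∀ n, 0 < a n) ∧ (∀ n, 0 < b n) ∧
      Tendsto a atTop (𝓝 0) ∧ Tendsto b atTop (𝓝 0) ∧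
      (∀ n, dist (x n) xstar ≤ a n) ∧ (∀ n, dist (y n) xstar ≤ b n) ∧
      Tendsto (fun n => a n / b n) atTop (𝓝 0) :=
  exists_pos_ge_tendsto_zero_with_div_tendsto_zero
    (tendsto_iff_dist_tendsto_zero.mp hx) (tendsto_iff_dist_tendsto_zero.mp hy)
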